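/- Suppose the nodes ξ_1,…,ξ_n are pairwise distinct and a_{i,l_i−1} ≠ 0 for all i, and set C₁ = ‖U(ξ_1,l_1+1,…,ξ_n,l_n+1)^{−1}‖_∞. Then for every ε > 0 and every vector v ∈ ℂ^R with |v_k| ≤ ε for all k, the component of J_P(x)^{−1} v corresponding to the lowest magnitude a_{i,0} satisfies |[J_P(x)^{−1} v]_{a_{i,0}}| ≤ C₁ ε for every i = 1,…,n. -/

import Mathlib

open scoped BigOperators

noncomputable section

/-- Offset of the `i`-th block of columns: the sum of the multiplicities of all previous blocks. -/
def blockOff {n : ℕ} (L : Fin n → ℕ) (i : Fin n) : ℕ := ∑ i' ∈ Finset.Iio i, L i'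

theorem blockOff_add_lt {n : ℕ} (L : Fin n → ℕ) (i : Fin n) {j : ℕ} (hj : j < L i) :
    blockOff L i + j < ∑ i', L i' := by
  have h1 : ∑ i' ∈ insert i (Finset.Iio i), L i' = ∑ i' ∈ Finset.Iio i, L i' + L i := by
    rw [Finset.sum_insert (by simp)]; ring
  have h2 : ∑ i' ∈ insert i (Finset.Iio i), L i' ≤ ∑ i', L i' :=
    Finset.sum_le_sum_of_subset (Finset.subset_univ _)
  unfold blockOff
  omega

/-- The flattened index of position `j` inside block `i`, when block `i` has size `L i`. -/
def encC {n : ℕ} (L : Fin n → ℕ) (i : Fin n) (j : Fin (L i)) : Fin (∑ i', L i') :=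
  ⟨blockOff L i + j, blockOff_add_lt L i j.isLt⟩

/-- The (square) confluent Vandermonde matrix on nodes `ξ_i` with multiplicities `L i`:
rows are indexed by `k = 0,…,(∑ L i)−1`; the entry in row `k` and column `j` of block `i`
is `(k)_j ξ_i^{k−j}` (zero when `j > k`). -/
def confVand {n : ℕ} (L : Fin n → ℕ) (ξ : Fin n → ℂ) :
    Matrix (Fin (∑ i, L i)) (Fin (∑ i, L i)) ℂ :=
  fun k c => ∑ i, ∑ j : Fin (L i),
    if c = encC L i j then ((k : ℕ).descFactorial j : ℂ) * ξ i ^ ((k : ℕ) - (j : ℕ)) else 0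

/-- The index (in the parameter vector) of the magnitude `a_{i,j}` (`j < l i`) or,
for `j = l i`, of the node `ξ_i`; the parameters are ordered
`(a_{1,0},…,a_{1,l_1−1}, ξ_1, …, a_{n,0},…,a_{n,l_n−1}, ξ_n)`. -/
def encP {n : ℕ} (l : Fin n → ℕ) (i : Fin n) (j : Fin (l i + 1)) :
    Fin (∑ i', (l i' + 1)) :=
  encC (fun i' => l i' + 1) i j

/-- The parameter vector `x = (a_{1,0},…,a_{1,l_1−1}, ξ_1, …, a_{n,0},…,a_{n,l_n−1}, ξ_n)`. -/
def pronyParam {n : ℕ} (l : Fin n → ℕ) (ξ : Fin n → ℂ)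
    (a : (i : Fin n) → Fin (l i) → ℂ) : Fin (∑ i', (l i' + 1)) → ℂ :=
  fun p => ∑ i, ∑ j : Fin (l i + 1),
    if p = encP l i j then (if h : (j : ℕ) < l i then a i ⟨j, h⟩ else ξ i) else 0

/-- The Prony map `P : ℂ^R → ℂ^R` sending the parameter vector
`x = (a_{1,0},…,a_{1,l_1−1}, ξ_1, …, a_{n,0},…,a_{n,l_n−1}, ξ_n)` to the moment vector
`(m_0,…,m_{R−1})`, `m_k = Σ_i Σ_{j<l_i} a_{i,j} (k)_j ξ_i^{k−j}`. -/
def pronyMap {n : ℕ} (l : Fin n → ℕ) (x : Fin (∑ i', (l i' + 1)) → ℂ) :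
    Fin (∑ i', (l i' + 1)) → ℂ :=
  fun k => ∑ i, ∑ j : Fin (l i),
    x (encP l i (Fin.castSucc j)) * ((k : ℕ).descFactorial j : ℂ) *
      (x (encP l i (Fin.last (l i)))) ^ ((k : ℕ) - (j : ℕ))

/-- The Jacobian matrix of the Prony map at `x`: the `(k,p)` entry is the partial
derivative of the `k`-th moment with respect to the `p`-th parameter. -/
def pronyJacobian {n : ℕ} (l : Fin n → ℕ) (x : Fin (∑ i', (l i' + 1)) → ℂ) :
    Matrix (Fin (∑ i', (l i' + 1))) (Fin (∑ i', (l i' + 1))) ℂ :=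
  fun k p => deriv (fun t : ℂ => pronyMap l (Function.update x p t) k) (x p)


/-!
The Jacobian factors as `J_P(x) = U * B` with `U = U(ξ_1,l_1+1,…,ξ_n,l_n+1)`: the column of
`a_{i,j}` in `J_P(x)` is the column `(i,j)` of `U`, and since `(k)_j (k-j) = (k)_{j+1}` the
column of `ξ_i` is `∑_j a_{i,j}` times the column `(i,j+1)` of `U`. Thus `B` is the identity
except in the node columns, it is invertible because `a_{i,l_i-1} ≠ 0`, and its row at `a_{i,0}`
is a unit row. Hence the row of `J_P(x)⁻¹ = B⁻¹ * U⁻¹` at `a_{i,0}` is the corresponding row of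
`U⁻¹`, whose absolute row sum is at most `C₁`.
-/

open Matrix

theorem Fintype.sum_sum_ite_sigma_mk_eq {α M : Type*} {β : α → Type*} [Fintype α]
    [∀ a, Fintype (β a)] [DecidableEq (Sigma β)] [AddCommMonoid M] (g : (a : α) → β a → M)
    (a₀ : α) (b₀ : β a₀) :
    ∑ a, ∑ b : β a, (if (⟨a₀, b₀⟩ : Sigma β) = ⟨a, b⟩ then g a b else 0) = g a₀ b₀ := by
  rw [← Fintype.sum_sigma (fun s : Sigma β => if ⟨a₀, b₀⟩ = s then g s.1 s.2 else 0),
    Finset.sum_ite_eq]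
  simp

theorem Fintype.sum_sum_ite_sigma_mk_eq' {α M : Type*} {β : α → Type*} [Fintype α]
    [∀ a, Fintype (β a)] [DecidableEq (Sigma β)] [AddCommMonoid M] (g : (a : α) → β a → M)
    (a₀ : α) (b₀ : β a₀) :
    ∑ a, ∑ b : β a, (if (⟨a, b⟩ : Sigma β) = ⟨a₀, b₀⟩ then g a b else 0) = g a₀ b₀ := by
  simp only [eq_comm (b := (⟨a₀, b₀⟩ : Sigma β))]
  exact Fintype.sum_sum_ite_sigma_mk_eq g a₀ b₀

theorem Matrix.inv_mulVec_apply_of_row_eq_single {m R : Type*} [Fintype m] [DecidableEq m]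
    [CommRing R] {B : Matrix m m R} (hB : IsUnit B) {r : m} (hr : B r = Pi.single r 1)
    (w : m → R) : (B⁻¹ *ᵥ w) r = w r :=
  calc (B⁻¹ *ᵥ w) r = Pi.single r 1 ⬝ᵥ (B⁻¹ *ᵥ w) := (single_one_dotProduct _ _).symm
    _ = (B *ᵥ (B⁻¹ *ᵥ w)) r := by rw [← hr]; rfl
    _ = w r := by
      rw [Matrix.mulVec_mulVec, Matrix.mul_nonsing_inv _ ((Matrix.isUnit_iff_isUnit_det B).1 hB),
        Matrix.one_mulVec]

theorem Matrix.norm_mulVec_apply_le_iSup_sum_norm_mul {l m R : Type*} [Finite l] [Fintype m]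
    [SeminormedRing R] (A : Matrix l m R) {v : m → R} {ε : ℝ} (hε : 0 ≤ ε)
    (hv : ∀ c, ‖v c‖ ≤ ε) (r : l) : ‖(A *ᵥ v) r‖ ≤ (⨆ r', ∑ c, ‖A r' c‖) * ε :=
  calc ‖(A *ᵥ v) r‖ ≤ ∑ c, ‖A r c‖ * ‖v c‖ :=
        (norm_sum_le _ _).trans (Finset.sum_le_sum fun c _ => norm_mul_le _ _)
    _ ≤ (∑ c, ‖A r c‖) * ε := by
        rw [Finset.sum_mul]
        exact Finset.sum_le_sum fun c _ => mul_le_mul_of_nonneg_left (hv c) (norm_nonneg _)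
    _ ≤ (⨆ r', ∑ c, ‖A r' c‖) * ε :=
        mul_le_mul_of_nonneg_right
          (le_ciSup (f := fun r' => ∑ c, ‖A r' c‖) (Set.finite_range _).bddAbove r) hε

section FlatIndex

variable {n : ℕ}

theorem blockOff_eq_sum_castLE (L : Fin n → ℕ) (i : Fin n) :
    blockOff L i = ∑ k : Fin i, L (Fin.castLE i.2.le k) := by
  have : Finset.Iio i = Finset.univ.map (Fin.castLEEmb i.2.le) := by
    ext k
    simp only [Finset.mem_Iio, Finset.mem_map, Finset.mem_univ, true_and, Fin.castLEEmb_apply]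
    exact ⟨fun h => ⟨⟨k, h⟩, rfl⟩, by rintro ⟨k, rfl⟩; exact k.2⟩
  rw [blockOff, this, Finset.sum_map]
  rfl

theorem encC_eq_finSigmaFinEquiv (L : Fin n → ℕ) (i : Fin n) (j : Fin (L i)) :
    encC L i j = finSigmaFinEquiv ⟨i, j⟩ := by
  ext
  simp only [finSigmaFinEquiv_apply, encC, blockOff_eq_sum_castLE]

theorem encC_eq_encC_iff {L : Fin n → ℕ} {i i' : Fin n} {j : Fin (L i)} {j' : Fin (L i')} :
    encC L i j = encC L i' j' ↔ (⟨i, j⟩ : (i : Fin n) × Fin (L i)) = ⟨i', j'⟩ := by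
  simp only [encC_eq_finSigmaFinEquiv, finSigmaFinEquiv.injective.eq_iff]

theorem exists_encC_eq (L : Fin n → ℕ) (c : Fin (∑ i, L i)) : ∃ i j, encC L i j = c := by
  obtain ⟨⟨i, j⟩, rfl⟩ := finSigmaFinEquiv.surjective c
  exact ⟨i, j, encC_eq_finSigmaFinEquiv L i j⟩

theorem sum_sum_ite_encC_eq {M : Type*} [AddCommMonoid M] {L : Fin n → ℕ}
    (g : (i : Fin n) → Fin (L i) → M) (i₀ : Fin n) (j₀ : Fin (L i₀)) :
    ∑ i, ∑ j : Fin (L i), (if encC L i₀ j₀ = encC L i j then g i j else 0) = g i₀ j₀ := by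
  simp only [encC_eq_encC_iff]
  exact Fintype.sum_sum_ite_sigma_mk_eq g i₀ j₀

theorem encP_castSucc_eq_encP_castSucc_iff {l : Fin n → ℕ} {i i' : Fin n} {j : Fin (l i)}
    {j' : Fin (l i')} :
    encP l i j.castSucc = encP l i' j'.castSucc ↔
      (⟨i, j⟩ : (i : Fin n) × Fin (l i)) = ⟨i', j'⟩ := by
  rw [encP, encP, encC_eq_encC_iff]
  simp only [Sigma.mk.inj_iff]
  constructor
  · rintro ⟨rfl, h⟩
    exact ⟨rfl, heq_of_eq (Fin.castSucc_injective _ (eq_of_heq h))⟩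
  · rintro ⟨rfl, h⟩
    exact ⟨rfl, heq_of_eq (congrArg _ (eq_of_heq h))⟩

theorem encP_eq_encP_iff {l : Fin n → ℕ} {i i' : Fin n} {j : Fin (l i + 1)}
    {j' : Fin (l i' + 1)} : encP l i j = encP l i' j' ↔ i = i' ∧ (j : ℕ) = j' := by
  rw [encP, encP, encC_eq_encC_iff, Sigma.mk.inj_iff]
  constructor
  · rintro ⟨rfl, h⟩
    exact ⟨rfl, congrArg Fin.val (eq_of_heq h)⟩
  · rintro ⟨rfl, h⟩
    exact ⟨rfl, heq_of_eq (Fin.ext h)⟩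

theorem exists_encP_eq (l : Fin n → ℕ) (p : Fin (∑ i, (l i + 1))) : ∃ i j, encP l i j = p :=
  exists_encC_eq _ p

theorem encP_castSucc_ne_encP_last {l : Fin n → ℕ} {i i' : Fin n} (j : Fin (l i)) :
    encP l i j.castSucc ≠ encP l i' (Fin.last (l i')) := by
  rw [Ne, encP_eq_encP_iff]
  rintro ⟨rfl, h⟩
  exact (Fin.castSucc_lt_last j).ne (Fin.ext h)

theorem encP_last_ne_encP_castSucc {l : Fin n → ℕ} {i i' : Fin n} (j : Fin (l i')) :
    encP l i (Fin.last (l i)) ≠ encP l i' j.castSucc :=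
  (encP_castSucc_ne_encP_last j).symm

theorem encP_last_eq_encP_last_iff {l : Fin n → ℕ} {i i' : Fin n} :
    encP l i (Fin.last (l i)) = encP l i' (Fin.last (l i')) ↔ i = i' := by
  rw [encP_eq_encP_iff]
  exact ⟨And.left, by rintro rfl; exact ⟨rfl, rfl⟩⟩

end FlatIndex

section PronyParameters

variable {n : ℕ} (l : Fin n → ℕ)

theorem confVand_apply_encC (L : Fin n → ℕ) (ξ : Fin n → ℂ) (k : Fin (∑ i, L i)) (i : Fin n)
    (j : Fin (L i)) :
    confVand L ξ k (encC L i j) = ((k : ℕ).descFactorial j : ℂ) * ξ i ^ ((k : ℕ) - j) :=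
  sum_sum_ite_encC_eq _ i j

theorem pronyParam_encP_castSucc (ξ : Fin n → ℂ) (a : (i : Fin n) → Fin (l i) → ℂ) (i : Fin n)
    (j : Fin (l i)) : pronyParam l ξ a (encP l i j.castSucc) = a i j :=
  (sum_sum_ite_encC_eq (L := fun i => l i + 1) _ i _).trans (by simp)

theorem pronyParam_encP_last (ξ : Fin n → ℂ) (a : (i : Fin n) → Fin (l i) → ℂ) (i : Fin n) :
    pronyParam l ξ a (encP l i (Fin.last (l i))) = ξ i :=
  (sum_sum_ite_encC_eq (L := fun i => l i + 1) _ i _).trans (by simp)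

theorem hasDerivAt_pronyMap_update (x : Fin (∑ i', (l i' + 1)) → ℂ)
    (p k : Fin (∑ i', (l i' + 1))) :
    HasDerivAt (fun t => pronyMap l (Function.update x p t) k)
      (∑ i, ∑ j : Fin (l i),
        (Pi.single (M := fun _ => ℂ) p 1 (encP l i j.castSucc) * ((k : ℕ).descFactorial j : ℂ) *
            x (encP l i (Fin.last (l i))) ^ ((k : ℕ) - j) +
          x (encP l i j.castSucc) * ((k : ℕ).descFactorial j : ℂ) *
            (((k : ℕ) - j : ℕ) * x (encP l i (Fin.last (l i))) ^ ((k : ℕ) - j - 1) *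
              Pi.single (M := fun _ => ℂ) p 1 (encP l i (Fin.last (l i)))))) (x p) := by
  have hcoord q := hasDerivAt_pi.1 (hasDerivAt_update x p (x p)) q
  refine HasDerivAt.fun_sum fun i _ => HasDerivAt.fun_sum fun j _ => ?_
  simpa only [Function.update_eq_self] using
    ((hcoord _).mul_const _).fun_mul ((hcoord _).fun_pow _)

theorem pronyJacobian_apply_encP_castSucc (x : Fin (∑ i', (l i' + 1)) → ℂ)
    (k : Fin (∑ i', (l i' + 1))) (i : Fin n) (j : Fin (l i)) :
    pronyJacobian l x k (encP l i j.castSucc) =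
      ((k : ℕ).descFactorial j : ℂ) * x (encP l i (Fin.last (l i))) ^ ((k : ℕ) - j) := by
  rw [pronyJacobian, (hasDerivAt_pronyMap_update l x _ k).deriv]
  simp only [Pi.single_apply, encP_castSucc_eq_encP_castSucc_iff, encP_last_ne_encP_castSucc,
    if_false, mul_zero, add_zero, ite_mul, one_mul, zero_mul]
  exact Fintype.sum_sum_ite_sigma_mk_eq' (β := fun i => Fin (l i)) _ i j

theorem pronyJacobian_apply_encP_last (x : Fin (∑ i', (l i' + 1)) → ℂ)
    (k : Fin (∑ i', (l i' + 1))) (i : Fin n) :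
    pronyJacobian l x k (encP l i (Fin.last (l i))) =
      ∑ j : Fin (l i), x (encP l i j.castSucc) * (((k : ℕ).descFactorial (j + 1) : ℂ) *
        x (encP l i (Fin.last (l i))) ^ ((k : ℕ) - (j + 1))) := by
  rw [pronyJacobian, (hasDerivAt_pronyMap_update l x _ k).deriv]
  simp only [Pi.single_apply, encP_castSucc_ne_encP_last, encP_last_eq_encP_last_iff,
    if_false, mul_zero, zero_mul, zero_add, mul_ite, mul_one]
  rw [Fintype.sum_eq_single i fun i' hi' => by simp [hi']]
  refine Finset.sum_congr rfl fun j _ => ?_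
  rw [if_pos rfl, Nat.descFactorial_succ, Nat.sub_sub]
  push_cast
  ring

end PronyParameters

section RightFactor

variable {n : ℕ} (l : Fin n → ℕ) (a : (i : Fin n) → Fin (l i) → ℂ)

def pronyJacobianRightFactor : Matrix (Fin (∑ i', (l i' + 1))) (Fin (∑ i', (l i' + 1))) ℂ :=
  Matrix.of fun p q => ∑ i, ∑ j : Fin (l i + 1),
    if q = encP l i j then
      Fin.lastCases (∑ j' : Fin (l i), if p = encP l i j'.succ then a i j' else 0)
        (fun j' => if p = encP l i j'.castSucc then 1 else 0) j
    else 0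

variable {l a}

theorem pronyJacobianRightFactor_apply_encP_castSucc (p : Fin (∑ i', (l i' + 1))) (i : Fin n)
    (j : Fin (l i)) :
    pronyJacobianRightFactor l a p (encP l i j.castSucc) =
      if p = encP l i j.castSucc then 1 else 0 :=
  (sum_sum_ite_encC_eq (L := fun i => l i + 1) _ i _).trans (Fin.lastCases_castSucc _)

theorem pronyJacobianRightFactor_apply_encP_last (p : Fin (∑ i', (l i' + 1))) (i : Fin n) :
    pronyJacobianRightFactor l a p (encP l i (Fin.last (l i))) =
      ∑ j : Fin (l i), if p = encP l i j.succ then a i j else 0 :=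
  (sum_sum_ite_encC_eq (L := fun i => l i + 1) _ i _).trans Fin.lastCases_last

theorem pronyJacobianRightFactor_row_encP_zero {i : Fin n} (hl : l i ≠ 0) :
    pronyJacobianRightFactor l a (encP l i ⟨0, (l i).succ_pos⟩) =
      Pi.single (encP l i ⟨0, (l i).succ_pos⟩) 1 := by
  funext q
  obtain ⟨i', j, rfl⟩ := exists_encP_eq l q
  induction j using Fin.lastCases with
  | last =>
    rw [pronyJacobianRightFactor_apply_encP_last, Pi.single_apply, if_neg, Finset.sum_eq_zero]
    · exact fun j _ => if_neg fun h => by simpa using (encP_eq_encP_iff.1 h).2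
    · rw [encP_eq_encP_iff]
      rintro ⟨rfl, h⟩
      exact hl h
  | cast j =>
    rw [pronyJacobianRightFactor_apply_encP_castSucc, Pi.single_apply]
    exact if_congr eq_comm rfl rfl

theorem vecMul_pronyJacobianRightFactor_apply_encP_castSucc (x : Fin (∑ i', (l i' + 1)) → ℂ)
    (i : Fin n) (j : Fin (l i)) :
    (x ᵥ* pronyJacobianRightFactor l a) (encP l i j.castSucc) = x (encP l i j.castSucc) := by
  simp only [Matrix.vecMul, dotProduct, pronyJacobianRightFactor_apply_encP_castSucc, mul_ite,
    mul_one, mul_zero, Finset.sum_ite_eq', Finset.mem_univ, if_true]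

theorem vecMul_pronyJacobianRightFactor_apply_encP_last (x : Fin (∑ i', (l i' + 1)) → ℂ)
    (i : Fin n) :
    (x ᵥ* pronyJacobianRightFactor l a) (encP l i (Fin.last (l i))) =
      ∑ j : Fin (l i), x (encP l i j.succ) * a i j := by
  simp only [Matrix.vecMul, dotProduct, pronyJacobianRightFactor_apply_encP_last, Finset.mul_sum,
    mul_ite, mul_zero]
  rw [Finset.sum_comm]
  simp only [Finset.sum_ite_eq', Finset.mem_univ, if_true]

theorem eq_zero_of_vecMul_pronyJacobianRightFactor_eq_zero (hl : ∀ i, 1 ≤ l i)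
    (hhigh : ∀ i, a i ⟨l i - 1, Nat.sub_lt (hl i) Nat.one_pos⟩ ≠ 0)
    {x : Fin (∑ i', (l i' + 1)) → ℂ} (hx : x ᵥ* pronyJacobianRightFactor l a = 0) : x = 0 := by
  have hmag (i : Fin n) (j : Fin (l i)) : x (encP l i j.castSucc) = 0 := by
    rw [← vecMul_pronyJacobianRightFactor_apply_encP_castSucc (a := a) x, hx, Pi.zero_apply]
  have hnode (i : Fin n) : x (encP l i (Fin.last (l i))) = 0 := by
    have htop : l i - 1 < l i := Nat.sub_lt (hl i) Nat.one_pos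
    have hsucc : (⟨l i - 1, htop⟩ : Fin (l i)).succ = Fin.last (l i) := by
      ext; simp only [Fin.val_succ, Fin.val_last]; omega
    have h := congrFun hx (encP l i (Fin.last (l i)))
    rw [vecMul_pronyJacobianRightFactor_apply_encP_last, Pi.zero_apply,
      Finset.sum_eq_single ⟨l i - 1, htop⟩, hsucc] at h
    · exact (mul_eq_zero.1 h).resolve_right (hhigh i)
    · intro j _ hj
      have hlt : (j : ℕ) + 1 < l i := by
        have : (j : ℕ) ≠ l i - 1 := fun h => hj (Fin.ext h)
        omega
      have : j.succ = (⟨j + 1, hlt⟩ : Fin (l i)).castSucc := rfl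
      rw [this, hmag, zero_mul]
    · exact fun h => absurd (Finset.mem_univ _) h
  funext p
  obtain ⟨i, j, rfl⟩ := exists_encP_eq l p
  induction j using Fin.lastCases with
  | last => exact hnode i
  | cast j => exact hmag i j

theorem isUnit_pronyJacobianRightFactor (hl : ∀ i, 1 ≤ l i)
    (hhigh : ∀ i, a i ⟨l i - 1, Nat.sub_lt (hl i) Nat.one_pos⟩ ≠ 0) :
    IsUnit (pronyJacobianRightFactor l a) := by
  rw [← Matrix.vecMul_injective_iff_isUnit]
  intro x y hxy
  rw [← sub_eq_zero]
  exact eq_zero_of_vecMul_pronyJacobianRightFactor_eq_zero hl hhigh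
    (by rw [Matrix.sub_vecMul]; exact sub_eq_zero.2 hxy)

theorem pronyJacobian_pronyParam (ξ : Fin n → ℂ) :
    pronyJacobian l (pronyParam l ξ a) =
      confVand (fun i => l i + 1) ξ * pronyJacobianRightFactor l a := by
  ext k q
  obtain ⟨i, j, rfl⟩ := exists_encP_eq l q
  rw [Matrix.mul_apply]
  induction j using Fin.lastCases with
  | last =>
    simp only [pronyJacobian_apply_encP_last, pronyParam_encP_castSucc, pronyParam_encP_last,
      pronyJacobianRightFactor_apply_encP_last, Finset.mul_sum, mul_ite, mul_zero]
    rw [Finset.sum_comm]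
    refine Finset.sum_congr rfl fun j _ => ?_
    rw [Finset.sum_ite_eq', if_pos (Finset.mem_univ _), encP, confVand_apply_encC, Fin.val_succ,
      mul_comm]
  | cast j =>
    simp only [pronyJacobian_apply_encP_castSucc, pronyParam_encP_last,
      pronyJacobianRightFactor_apply_encP_castSucc, mul_ite, mul_one, mul_zero,
      Finset.sum_ite_eq', Finset.mem_univ, if_true]
    rw [encP, confVand_apply_encC, Fin.val_castSucc]

end RightFactor

/-- let `C₁ = ‖U(ξ_1,l_1+1,…,ξ_n,l_n+1)⁻¹‖_∞` (maximal row sum of absolute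
values).  If the nodes are pairwise distinct and the highest magnitudes are nonzero, then
for every `ε > 0` and every `v` with `|v_k| ≤ ε`, the component of `J_P(x)⁻¹ v`
corresponding to the lowest magnitude `a_{i,0}` has absolute value at most `C₁ ε`. -/
theorem pronyJacobian_inv_lowest_magnitude_component_bound
    (n : ℕ) (l : Fin n → ℕ) (hl : ∀ i, 1 ≤ l i)
    (ξ : Fin n → ℂ) (a : (i : Fin n) → Fin (l i) → ℂ)
    (hhigh : ∀ i, a i ⟨l i - 1, by have := hl i; omega⟩ ≠ 0)
    (C₁ : ℝ)
    (hC₁ : C₁ = ⨆ r, ∑ c, ‖((confVand (fun i => l i + 1) ξ)⁻¹) r c‖)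
    (ε : ℝ) (hε : 0 < ε) (v : Fin (∑ i', (l i' + 1)) → ℂ)
    (hv : ∀ k, ‖v k‖ ≤ ε) :
    ∀ i : Fin n,
      ‖Matrix.mulVec (pronyJacobian l (pronyParam l ξ a))⁻¹ v
            (encP l i ⟨0, by omega⟩)‖ ≤ C₁ * ε := by
  intro i
  rw [pronyJacobian_pronyParam, Matrix.mul_inv_rev, ← Matrix.mulVec_mulVec,
    Matrix.inv_mulVec_apply_of_row_eq_single (isUnit_pronyJacobianRightFactor hl hhigh)
      (pronyJacobianRightFactor_row_encP_zero (Nat.one_le_iff_ne_zero.1 (hl i))), hC₁]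
  exact Matrix.norm_mulVec_apply_le_iSup_sum_norm_mul _ hε.le hv _
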